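/- Let p be a prime and let G be a Camina group that is a p-group of order p^n with nilpotency class 2, and suppose the center Z(G) has order p^k. Then the dimension over ℂ of the Terwilliger algebra T(G) equals (p^{n−k} + p^k − 1)(p^{n−k} + p^k − 2) + p^n. -/

import Mathlib

/-!
Every matrix that is constant on the cells `{(x, y) : x ∈ C, y ∈ D, y x⁻¹ ∈ E}` (for conjugacy
classes `C, D, E`) lies in `T(G)`: the indicator of a cell is `E*_C A_E E*_D`. Conversely the
generators are cell-constant, so `T(G)` is the space of cell-constant matrices, of dimension the
number of nonempty cells, as soon as cell-constant matrices are closed under multiplication. This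
holds when the cells are triply regular: for `(x, y)` and `(x', y')` in the same cell the middle
points `t` can be matched bijectively, cell by cell.

In a Camina group of class `2` the commutator subgroup is the centre `Z`, so the noncentral classes
are the cosets `x Z ≠ Z`. Matching `t` with `t z`, where `z ∈ Z` depends only on the coset of `t`,
shows triple regularity. Over a pair of classes `(C, D)` there is exactly one cell, except when
`C = D` is noncentral, where the cells are indexed by `y x⁻¹ ∈ Z`. With `m` noncentral classes and
`|Z| = s`, this gives `(s + m)² + m (s - 1)` cells, and the class equation reads `(m + 1) s = |G|`.
-/

open scoped Classical Pointwise

/-- The conjugacy class of `x` in `G`. -/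
def conjClass {G : Type*} [Group G] (x : G) : Set G := {y | ∃ g : G, g * x * g⁻¹ = y}

/-- The adjacency matrix of a subset `C` of `G`. -/
noncomputable def adjMat (G : Type*) [Group G] (C : Set G) : Matrix G G ℂ :=
  Matrix.of fun x y => if y * x⁻¹ ∈ C then (1 : ℂ) else 0

/-- The dual idempotent of a subset `C` of `G` (base point the identity). -/
noncomputable def dualIdem (G : Type*) [Group G] (C : Set G) : Matrix G G ℂ :=
  Matrix.of fun x y => if x = y ∧ y ∈ C then (1 : ℂ) else 0

/-- The Terwilliger algebra of the group association scheme of `G`, with base point `e`. -/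
noncomputable def TerwAlg (G : Type*) [Group G] [Fintype G] [DecidableEq G] : Subalgebra ℂ (Matrix G G ℂ) :=
  Algebra.adjoin ℂ
    ((Set.range fun x : G => adjMat G (conjClass x)) ∪
     (Set.range fun x : G => dualIdem G (conjClass x)))

/-- A Camina group: a nonabelian group in which every conjugacy class outside the
commutator subgroup is a coset of the commutator subgroup. -/
def IsCamina (G : Type*) [Group G] : Prop :=
  (¬ ∀ a b : G, a * b = b * a) ∧
  ∀ x : G, x ∉ commutator G → conjClass x = x • (commutator G : Set G)

/-- The action of the unit group of a field on (the multiplicative version of) its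
additive group, by multiplication. -/
noncomputable def frobAct (F : Type*) [Field F] : Fˣ →* MulAut (Multiplicative F) where
  toFun u := AddEquiv.toMultiplicative (DistribMulAction.toAddAut Fˣ F u)
  map_one' := by ext x; simp [DistribMulAction.toAddAut]; rfl
  map_mul' u v := by ext x; simp [DistribMulAction.toAddAut, mul_smul]; rfl


/-- The Frobenius group `F ⋊ Fˣ` for `F` the field with `p ^ r` elements. -/
abbrev FrobGrp (p r : ℕ) [Fact p.Prime] : Type :=
  Multiplicative (GaloisField p r) ⋊[frobAct (GaloisField p r)] (GaloisField p r)ˣ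

open Subgroup

section ConjClass

variable {G : Type*} [Group G]

lemma mem_conjClass_iff {x y : G} : y ∈ conjClass x ↔ IsConj x y := isConj_iff.symm

lemma conjClass_eq_conjugatesOf (x : G) : conjClass x = conjugatesOf x :=
  Set.ext fun _ => mem_conjClass_iff

lemma dualIdem_eq_diagonal (C : Set G) :
    dualIdem G C = Matrix.diagonal fun y => if y ∈ C then 1 else 0 := by
  ext x y
  by_cases hxy : x = y <;> simp [dualIdem, hxy]

lemma ConjClasses.mk_mem_noncenter_iff {x : G} :
    ConjClasses.mk x ∈ ConjClasses.noncenter G ↔ x ∉ center G := by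
  refine ⟨fun hx hxZ => (ConjClasses.mk_bijOn G).mapsTo hxZ hx,
    fun hx => by_contra fun hxc => hx ?_⟩
  obtain ⟨z, hz, hzx⟩ := (ConjClasses.mk_bijOn G).surjOn hxc
  rw [← (ConjClasses.mk_eq_mk_iff_isConj.mp hzx).eq_of_left_mem_center (by rwa [← coe_center])]
  exact hz

theorem ConjClasses.nat_card_eq_center_add_noncenter [Finite G] :
    Nat.card (ConjClasses G) = Nat.card (center G) + Nat.card (ConjClasses.noncenter G) := by
  rw [← Nat.card_congr (Equiv.Set.sumCompl (ConjClasses.noncenter G)), Nat.card_sum, add_comm]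
  exact congrArg (· + _) (Nat.card_congr ((ConjClasses.mk_bijOn G).equiv _)).symm

end ConjClass

def Subgroup.cosetShift {G : Type*} [Group G] (N : Subgroup G) (c : G ⧸ N → G)
    (hc : ∀ q, c q ∈ N) : Equiv.Perm G where
  toFun t := t * c t
  invFun t := t * (c t)⁻¹
  left_inv t := by simp only [QuotientGroup.mk_mul_of_mem _ (hc _), mul_inv_cancel_right]
  right_inv t := by
    simp only [QuotientGroup.mk_mul_of_mem _ (inv_mem (hc _)), inv_mul_cancel_right]

theorem sum_prod_ite_diag {X : Type*} [Fintype X] [DecidableEq X] (P : X → Prop)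
    [DecidablePred P] (s : ℕ) (hs : 1 ≤ s) :
    ∑ a : X × X, (if a.1 = a.2 ∧ P a.1 then s else 1) =
      Nat.card X ^ 2 + Nat.card {x // P x} * (s - 1) := by
  have h : ∀ a : X × X, (if a.1 = a.2 ∧ P a.1 then s else 1) =
      1 + if a.1 = a.2 then (if P a.1 then s - 1 else 0) else 0 := fun a => by
    split_ifs <;> simp_all
  simp only [h, Finset.sum_add_distrib, Fintype.sum_prod_type, Fintype.sum_ite_eq]
  simp [Finset.sum_ite, Nat.card_eq_fintype_card, Fintype.card_subtype, sq]

namespace TerwAlg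

variable {G : Type*} [Group G]

def cell (p : G × G) : (ConjClasses G × ConjClasses G) × ConjClasses G :=
  ((ConjClasses.mk p.1, ConjClasses.mk p.2), ConjClasses.mk (p.2 * p.1⁻¹))

lemma cell_eq_cell_iff {x y x' y' : G} :
    cell (x, y) = cell (x', y') ↔
      IsConj x x' ∧ IsConj y y' ∧ IsConj (y * x⁻¹) (y' * x'⁻¹) := by
  simp only [cell, Prod.mk.injEq, ConjClasses.mk_eq_mk_iff_isConj, and_assoc]

lemma mk_mem_range_cell_iff {x y : G} {e : ConjClasses G} :
    ((ConjClasses.mk x, ConjClasses.mk y), e) ∈ Set.range (cell (G := G)) ↔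
      ∃ x' y', IsConj x' x ∧ IsConj y' y ∧ ConjClasses.mk (y' * x'⁻¹) = e := by
  simp only [Set.mem_range, cell, Prod.mk.injEq, ConjClasses.mk_eq_mk_iff_isConj, Prod.exists,
    and_assoc]

lemma eq_iff_eq_of_cell_eq {x y x' y' : G} (h : cell (x, y) = cell (x', y')) :
    x = y ↔ x' = y' := by
  have h3 := (cell_eq_cell_iff.mp h).2.2
  rw [eq_comm, ← mul_inv_eq_one, ← isConj_one_left, eq_comm (a := x'), ← mul_inv_eq_one (a := y'),
    ← isConj_one_left]
  exact ⟨h3.symm.trans, h3.trans⟩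

def IsCellConst (M : Matrix G G ℂ) : Prop :=
  ∀ x y x' y' : G, cell (x, y) = cell (x', y') → M x y = M x' y'

def TriplyRegular (G : Type*) [Group G] : Prop :=
  ∀ x y x' y' : G, cell (x, y) = cell (x', y') →
    ∃ σ : Equiv.Perm G, ∀ t, cell (x, t) = cell (x', σ t) ∧ cell (t, y) = cell (σ t, y')

lemma isCellConst_adjMat (c : G) : IsCellConst (adjMat G (conjClass c)) := by
  intro x y x' y' h
  have h3 := (cell_eq_cell_iff.mp h).2.2
  simp only [adjMat, Matrix.of_apply, mem_conjClass_iff]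
  exact if_congr ⟨fun h' => h'.trans h3, fun h' => h'.trans h3.symm⟩ rfl rfl

lemma isCellConst_dualIdem (c : G) : IsCellConst (dualIdem G (conjClass c)) := by
  intro x y x' y' h
  have h2 := (cell_eq_cell_iff.mp h).2.1
  simp only [dualIdem, Matrix.of_apply, mem_conjClass_iff]
  exact if_congr (and_congr (eq_iff_eq_of_cell_eq h)
    ⟨fun h' => h'.trans h2, fun h' => h'.trans h2.symm⟩) rfl rfl

lemma IsCellConst.add {M N : Matrix G G ℂ} (hM : IsCellConst M) (hN : IsCellConst N) :
    IsCellConst (M + N) := fun x y x' y' h => by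
  simp only [Matrix.add_apply, hM x y x' y' h, hN x y x' y' h]

lemma IsCellConst.mul [Fintype G] (hreg : TriplyRegular G) {M N : Matrix G G ℂ}
    (hM : IsCellConst M) (hN : IsCellConst N) : IsCellConst (M * N) := by
  intro x y x' y' h
  obtain ⟨σ, hσ⟩ := hreg x y x' y' h
  simp only [Matrix.mul_apply]
  exact Fintype.sum_equiv σ _ _ fun t => by rw [hM _ _ _ _ (hσ t).1, hN _ _ _ _ (hσ t).2]

variable (G) in
noncomputable def cellLift : (Set.range (cell (G := G)) → ℂ) →ₗ[ℂ] Matrix G G ℂ where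
  toFun f := Matrix.of fun x y => f ⟨cell (x, y), (x, y), rfl⟩
  map_add' _ _ := rfl
  map_smul' _ _ := rfl

lemma cellLift_injective : Function.Injective (cellLift G) := by
  intro f g h
  funext ⟨_, (x, y), rfl⟩
  exact congrFun (congrFun h x) y

lemma mem_range_cellLift {M : Matrix G G ℂ} (hM : IsCellConst M) :
    M ∈ LinearMap.range (cellLift G) :=
  ⟨fun c => M (Set.rangeSplitting cell c).1 (Set.rangeSplitting cell c).2, by
    ext x y
    exact hM _ _ _ _ (Set.apply_rangeSplitting cell _)⟩

variable [Fintype G] [DecidableEq G]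

lemma isCellConst_algebraMap (r : ℂ) :
    IsCellConst (algebraMap ℂ (Matrix G G ℂ) r) := by
  intro x y x' y' h
  simp only [Matrix.algebraMap_matrix_apply, eq_iff_eq_of_cell_eq h]

lemma isCellConst_of_mem_terwAlg (hreg : TriplyRegular G) {M : Matrix G G ℂ}
    (hM : M ∈ TerwAlg G) : IsCellConst M := by
  induction hM using Algebra.adjoin_induction with
  | mem M hM =>
    rcases hM with ⟨c, rfl⟩ | ⟨c, rfl⟩
    exacts [isCellConst_adjMat c, isCellConst_dualIdem c]
  | algebraMap r => exact isCellConst_algebraMap r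
  | add M N _ _ hM hN => exact hM.add hN
  | mul M N _ _ hM hN => exact hM.mul hreg hN

noncomputable def cellIndicator (p : G × G) : Matrix G G ℂ :=
  dualIdem G (conjClass p.1) * adjMat G (conjClass (p.2 * p.1⁻¹)) * dualIdem G (conjClass p.2)

lemma cellIndicator_apply (p : G × G) (x y : G) :
    cellIndicator p x y = if cell (x, y) = cell p then 1 else 0 := by
  obtain ⟨a, b⟩ := p
  simp only [cellIndicator, cell_eq_cell_iff, isConj_comm (g := x), isConj_comm (g := y),
    isConj_comm (g := y * x⁻¹), dualIdem_eq_diagonal, Matrix.diagonal_mul, Matrix.mul_diagonal,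
    adjMat, Matrix.of_apply, mem_conjClass_iff]
  split_ifs <;> simp_all

lemma cellIndicator_mem_terwAlg (p : G × G) : cellIndicator p ∈ TerwAlg G :=
  mul_mem (mul_mem (Algebra.subset_adjoin (Or.inr ⟨p.1, rfl⟩))
    (Algebra.subset_adjoin (Or.inl ⟨_, rfl⟩))) (Algebra.subset_adjoin (Or.inr ⟨p.2, rfl⟩))

lemma cellLift_mem_terwAlg (f : Set.range (cell (G := G)) → ℂ) : cellLift G f ∈ TerwAlg G := by
  have : cellLift G f = ∑ c, f c • cellIndicator (Set.rangeSplitting cell c) := by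
    ext x y
    change f ⟨cell (x, y), (x, y), rfl⟩ = _
    simp only [Matrix.sum_apply, Matrix.smul_apply, cellIndicator_apply, Set.apply_rangeSplitting,
      smul_eq_mul, mul_ite, mul_one, mul_zero]
    rw [← Fintype.sum_ite_eq (⟨cell (x, y), (x, y), rfl⟩ : Set.range cell) f]
    exact Finset.sum_congr rfl fun c _ => by simp only [Subtype.ext_iff]
  rw [this]
  exact Subalgebra.sum_mem _ fun c _ => Subalgebra.smul_mem _ (cellIndicator_mem_terwAlg _) _

theorem finrank_eq_nat_card_range_cell (hreg : TriplyRegular G) :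
    Module.finrank ℂ (TerwAlg G) = Nat.card (Set.range (cell (G := G))) := by
  have : Subalgebra.toSubmodule (TerwAlg G) = LinearMap.range (cellLift G) :=
    le_antisymm (fun M hM => mem_range_cellLift (isCellConst_of_mem_terwAlg hreg hM))
      (by rintro _ ⟨f, rfl⟩; exact cellLift_mem_terwAlg f)
  rw [← Subalgebra.finrank_toSubmodule, this, LinearMap.finrank_range_of_inj cellLift_injective,
    Module.finrank_pi, Nat.card_eq_fintype_card]

end TerwAlg

open TerwAlg

section CosetClasses

variable {G : Type*} [Group G]

def NoncentralClassesAreCosets (G : Type*) [Group G] : Prop :=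
  ∀ x : G, x ∉ center G → conjugatesOf x = x • (center G : Set G)

theorem IsCamina.commutator_eq_center (hcam : IsCamina G)
    (h2 : (⊤ : Subgroup G).lowerCentralSeries 2 = ⊥) : commutator G = center G := by
  refine le_antisymm ?_ fun z hz => by_contra fun hz' => hcam.1 fun a b => ?_
  · rwa [← centralizer_univ, ← coe_top, ← commutator_eq_bot_iff_le_centralizer, commutator_def]
  · have hbot : commutator G = ⊥ := (eq_bot_iff_forall _).mpr fun w hw => by
      have hzw : z * w ∈ conjClass z := by
        rw [hcam.2 z hz']
        exact Set.smul_mem_smul_set hw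
      rw [mem_conjClass_iff] at hzw
      exact mul_eq_left.mp (hzw.eq_of_left_mem_center (by rwa [← coe_center])).symm
    exact mem_center_iff.mp (((commutator_eq_bot_iff_center_eq_top G).mp hbot).symm ▸ mem_top b) a

theorem IsCamina.noncentralClassesAreCosets (hcam : IsCamina G)
    (h2 : (⊤ : Subgroup G).lowerCentralSeries 2 = ⊥) : NoncentralClassesAreCosets G := by
  intro x hx
  rw [← conjClass_eq_conjugatesOf, ← hcam.commutator_eq_center h2]
  exact hcam.2 x (hcam.commutator_eq_center h2 ▸ hx)

namespace NoncentralClassesAreCosets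

variable (hG : NoncentralClassesAreCosets G)
include hG

theorem isConj_iff {u v : G} :
    IsConj u v ↔ (u : G ⧸ center G) = v ∧ (u ∈ center G → u = v) := by
  by_cases hu : u ∈ center G
  · refine ⟨fun h => ?_, fun h => h.2 hu ▸ IsConj.refl u⟩
    have huv := h.eq_of_left_mem_center (by rwa [← coe_center])
    exact ⟨congrArg _ huv, fun _ => huv⟩
  · change v ∈ conjugatesOf u ↔ _
    rw [hG u hu, mem_leftCoset_iff, SetLike.mem_coe, ← QuotientGroup.eq]
    simp [hu]

theorem triplyRegular : TriplyRegular G := by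
  intro x y x' y' h
  obtain ⟨hx, hy, hyx⟩ := cell_eq_cell_iff.mp h
  obtain ⟨hx₁, hx₂⟩ := hG.isConj_iff.mp hx
  obtain ⟨hy₁, hy₂⟩ := hG.isConj_iff.mp hy
  have hyx₂ := (hG.isConj_iff.mp hyx).2
  -- On the coset of `x` the element `t x⁻¹` is central, so its class is a singleton and the
  -- shift must be `x⁻¹ x'`; likewise on the coset of `y`.
  let c : G ⧸ center G → G := fun q =>
    if q = x then x⁻¹ * x' else if q = y then y⁻¹ * y' else 1
  have hc : ∀ q, c q ∈ center G := fun q => by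
    simp only [c]
    split_ifs
    exacts [QuotientGroup.eq.mp hx₁, QuotientGroup.eq.mp hy₁, one_mem _]
  have hcq : ∀ q, ((c q : G) : G ⧸ center G) = 1 :=
    fun q => (QuotientGroup.eq_one_iff _).mpr (hc q)
  have hmk : ∀ a b : G, a * b⁻¹ ∈ center G ↔ (a : G ⧸ center G) = b := fun a b => by
    rw [QuotientGroup.eq_iff_div_mem, div_eq_mul_inv]
  refine ⟨cosetShift (center G) c hc, fun t => ?_⟩
  change cell (x, t) = cell (x', t * c t) ∧ cell (t, y) = cell (t * c t, y')
  have h_t : IsConj t (t * c t) := by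
    refine hG.isConj_iff.mpr ⟨by simp [hcq], fun ht => ?_⟩
    have ht₁ : (t : G ⧸ center G) = 1 := (QuotientGroup.eq_one_iff t).mpr ht
    have hct : c t = 1 := by
      simp only [c]
      split_ifs with htx hty
      · rw [← hx₂ ((QuotientGroup.eq_one_iff x).mp (htx.symm.trans ht₁)), inv_mul_cancel]
      · rw [← hy₂ ((QuotientGroup.eq_one_iff y).mp (hty.symm.trans ht₁)), inv_mul_cancel]
      · rfl
    rw [hct, mul_one]
  have h_xt : IsConj (t * x⁻¹) (t * c t * x'⁻¹) := by
    refine hG.isConj_iff.mpr ⟨by simp [hcq, hx₁], fun htx => ?_⟩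
    simp only [c, if_pos ((hmk t x).mp htx)]
    group
  have h_ty : IsConj (y * t⁻¹) (y' * (t * c t)⁻¹) := by
    refine hG.isConj_iff.mpr ⟨by simp [hcq, hy₁], fun hyt => ?_⟩
    have hty := ((hmk y t).mp hyt).symm
    simp only [c]
    split_ifs with htx
    · obtain rfl : y' = y * x⁻¹ * x' := by
        rw [hyx₂ ((hmk y x).mpr (hty.symm.trans htx))]
        group
      group
    · group
  exact ⟨cell_eq_cell_iff.mpr ⟨hx, h_t, h_xt⟩, cell_eq_cell_iff.mpr ⟨h_t, hy, h_ty⟩⟩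

lemma fiber_eq_singleton {x y : G} (hxy : ¬(IsConj x y ∧ x ∉ center G)) :
    {e | ((ConjClasses.mk x, ConjClasses.mk y), e) ∈ Set.range (cell (G := G))} =
      {ConjClasses.mk (y * x⁻¹)} := by
  ext e
  simp only [Set.mem_ofPred_eq, mk_mem_range_cell_iff, Set.mem_singleton_iff]
  refine ⟨?_, fun he => ⟨x, y, IsConj.refl x, IsConj.refl y, he.symm⟩⟩
  rintro ⟨x', y', hx, hy, rfl⟩
  obtain ⟨hx₁, hx₂⟩ := hG.isConj_iff.mp hx
  obtain ⟨hy₁, hy₂⟩ := hG.isConj_iff.mp hy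
  rw [ConjClasses.mk_eq_mk_iff_isConj, hG.isConj_iff]
  refine ⟨by simp [hx₁, hy₁], fun hc => ?_⟩
  by_cases hx' : x' ∈ center G
  · obtain rfl := hx₂ hx'
    rw [hy₂ (by simpa using mul_mem hc hx')]
  · have hxZ : x ∉ center G :=
      fun h => hx' (hx.eq_of_right_mem_center (by rwa [← coe_center]) ▸ h)
    have hc₁ : (y' : G ⧸ center G) = x' := by
      simpa [mul_inv_eq_one] using (QuotientGroup.eq_one_iff _).mpr hc
    exact absurd ⟨hG.isConj_iff.mpr ⟨by rw [← hx₁, ← hy₁, hc₁], fun h => absurd h hxZ⟩, hxZ⟩ hxy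

lemma fiber_eq_image_center {x : G} (hx : x ∉ center G) :
    {e | ((ConjClasses.mk x, ConjClasses.mk x), e) ∈ Set.range (cell (G := G))} =
      ConjClasses.mk '' (center G : Set G) := by
  ext e
  simp only [Set.mem_ofPred_eq, mk_mem_range_cell_iff, Set.mem_image, SetLike.mem_coe]
  constructor
  · rintro ⟨x', y', hx', hy', rfl⟩
    refine ⟨y' * x'⁻¹, (QuotientGroup.eq_one_iff _).mp ?_, rfl⟩
    simp [(hG.isConj_iff.mp hx').1, (hG.isConj_iff.mp hy').1]
  · rintro ⟨z, hz, rfl⟩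
    refine ⟨x, z * x, IsConj.refl x, hG.isConj_iff.mpr ⟨?_, fun h => ?_⟩,
      by rw [mul_inv_cancel_right]⟩
    · simp [(QuotientGroup.eq_one_iff z).mpr hz]
    · exact absurd (by simpa using mul_mem (inv_mem hz) h) hx

lemma nat_card_fiber (a : ConjClasses G × ConjClasses G) :
    Nat.card {e | (a, e) ∈ Set.range (cell (G := G))} =
      if a.1 = a.2 ∧ a.1 ∈ ConjClasses.noncenter G then Nat.card (center G) else 1 := by
  obtain ⟨C, D⟩ := a
  obtain ⟨x, rfl⟩ := ConjClasses.mk_surjective C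
  obtain ⟨y, rfl⟩ := ConjClasses.mk_surjective D
  simp only [ConjClasses.mk_eq_mk_iff_isConj, ConjClasses.mk_mem_noncenter_iff]
  split_ifs with h
  · obtain ⟨hxy, hx⟩ := h
    rw [← ConjClasses.mk_eq_mk_iff_isConj.mpr hxy, hG.fiber_eq_image_center hx,
      Nat.card_image_of_injOn (ConjClasses.mk_bijOn G).injOn]
    rfl
  · rw [hG.fiber_eq_singleton h, Nat.card_unique]

theorem nat_card_range_cell [Fintype G] :
    Nat.card (Set.range (cell (G := G))) =
      Nat.card (ConjClasses G) ^ 2 +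
        Nat.card (ConjClasses.noncenter G) * (Nat.card (center G) - 1) := by
  have hs : 1 ≤ Nat.card (center G) := Nat.card_pos
  rw [Nat.card_congr (Equiv.setProdEquivSigma _), Nat.card_sigma]
  simp only [hG.nat_card_fiber]
  convert sum_prod_ite_diag (· ∈ ConjClasses.noncenter G) _ hs

theorem nat_card_noncenter_add_one_mul [Finite G] :
    (Nat.card (ConjClasses.noncenter G) + 1) * Nat.card (center G) = Nat.card G := by
  have hcarrier : ∀ C ∈ ConjClasses.noncenter G, Nat.card C.carrier = Nat.card (center G) := by
    intro C hC
    obtain ⟨x, rfl⟩ := ConjClasses.mk_surjective C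
    change Nat.card (conjugatesOf x) = _
    rw [hG x (ConjClasses.mk_mem_noncenter_iff.mp hC), Nat.card_coe_set_eq, Set.ncard_smul_set,
      ← Nat.card_coe_set_eq]
    rfl
  rw [← Group.nat_card_center_add_sum_card_noncenter_eq_card G, finsum_mem_congr rfl hcarrier,
    finsum_mem_eq_finite_toFinset_sum _ (Set.toFinite _), Finset.sum_const, smul_eq_mul,
    ← Set.ncard_eq_toFinset_card _, ← Nat.card_coe_set_eq]
  ring

end NoncentralClassesAreCosets

end CosetClasses

lemma add_sq_add_mul_sub_one_eq (m s : ℕ) (hs : 1 ≤ s) :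
    (s + m) ^ 2 + m * (s - 1) = (m + 1 + s - 1) * (m + 1 + s - 2) + (m + 1) * s := by
  obtain ⟨t, rfl⟩ : ∃ t, s = t + 1 := ⟨s - 1, by omega⟩
  rw [show m + 1 + (t + 1) - 1 = m + t + 1 by omega, show m + 1 + (t + 1) - 2 = m + t by omega,
    Nat.add_sub_cancel]
  ring

theorem stmt6_general (p n k : ℕ) (hp : p.Prime) {G : Type*} [Group G] [Fintype G] [DecidableEq G]
    (hcam : IsCamina G)
    (hcard : Fintype.card G = p ^ n)
    (hnil : (⊤ : Subgroup G).lowerCentralSeries 2 = ⊥ ∧ (⊤ : Subgroup G).lowerCentralSeries 1 ≠ ⊥)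
    (hZ : Nat.card (Subgroup.center G) = p ^ k) :
    Module.finrank ℂ (TerwAlg G) =
      (p ^ (n - k) + p ^ k - 1) * (p ^ (n - k) + p ^ k - 2) + p ^ n := by
  have hG := hcam.noncentralClassesAreCosets hnil.1
  have hclass := hG.nat_card_noncenter_add_one_mul
  rw [hZ, Nat.card_eq_fintype_card (α := G), hcard] at hclass
  have hk : k ≤ n := (Nat.pow_dvd_pow_iff_le_right hp.one_lt).mp (Dvd.intro_left _ hclass)
  have hm : Nat.card (ConjClasses.noncenter G) + 1 = p ^ (n - k) :=
    Nat.eq_of_mul_eq_mul_right (pow_pos hp.pos k)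
      (by rw [hclass, ← pow_add, Nat.sub_add_cancel hk])
  rw [finrank_eq_nat_card_range_cell hG.triplyRegular, hG.nat_card_range_cell,
    ConjClasses.nat_card_eq_center_add_noncenter, hZ, ← hm, ← hclass]
  exact add_sq_add_mul_sub_one_eq _ _ (Nat.one_le_pow _ _ hp.pos)

/-- Theorem 4.5: the dimension of the Terwilliger algebra of a Camina `p`-group of order
`p^n` with nilpotency class `2` and center of order `p^k`. -/
theorem stmt6 (p n k : ℕ) (hp : p.Prime) {G : Type*} [Group G] [Fintype G] [DecidableEq G]
    (hpg : IsPGroup p G) (hcam : IsCamina G)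
    (hcard : Fintype.card G = p ^ n)
    (hnil : (⊤ : Subgroup G).lowerCentralSeries 2 = ⊥ ∧ (⊤ : Subgroup G).lowerCentralSeries 1 ≠ ⊥)
    (hZ : Nat.card (Subgroup.center G) = p ^ k) :
    Module.finrank ℂ (TerwAlg G) =
      (p ^ (n - k) + p ^ k - 1) * (p ^ (n - k) + p ^ k - 2) + p ^ n :=
  stmt6_general p n k hp hcam hcard hnil hZ
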